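/- Fix 0 < ε < 1 < L. Let ν = N(0,1) on ℝ, let a > 0 satisfy ν([-a,a]) = ε, let M = max{1/a, √(eL/ε)}, let K be the smallest nonnegative integer with (2K+1)/M ≥ a, and let η = a/(2K+1). Let g : ℝ → ℝ be the periodic triangular spike function of height 1 and half-width η supported on [-a,a] (g(x) = 1 - |x - 2kη|/η on [(2k-1)η, (2k+1)η] for |x| ≤ a, and g = 0 for |x| > a), and define ρ ∝ ν·e^{-g}. Then R_∞(ρ‖ν) := sup_x log(ρ(x)/ν(x)) ≤ ε while FI(ρ‖ν) ≥ L. -/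
import Mathlib


open Real MeasureTheory

/-- Standard Gaussian density on `ℝ`. -/
noncomputable def stdGaussDensity (x : ℝ) : ℝ :=
  (Real.sqrt (2 * Real.pi))⁻¹ * Real.exp (-x ^ 2 / 2)

lemma gauss_pos (x : ℝ) : 0 < stdGaussDensity x := by
  unfold stdGaussDensity; positivity

lemma gauss_measurable : Measurable stdGaussDensity := by
  unfold stdGaussDensity; fun_prop

lemma gauss_integrable : Integrable stdGaussDensity := by
  have h : Integrable (fun x : ℝ => Real.exp (-(1/2) * x ^ 2)) := integrable_exp_neg_mul_sq (by norm_num)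
  have := h.const_mul (Real.sqrt (2 * Real.pi))⁻¹
  refine this.congr ?_
  filter_upwards with x
  unfold stdGaussDensity
  ring_nf

lemma gauss_integral : ∫ x : ℝ, stdGaussDensity x = 1 := by
  have h := integral_gaussian (1/2 : ℝ)
  unfold stdGaussDensity
  rw [MeasureTheory.integral_const_mul]
  have : ∀ x : ℝ, Real.exp (-x^2/2) = Real.exp (-(1/2) * x^2) := fun x => by ring_nf
  simp_rw [this, h]
  rw [show (π / (1/2) : ℝ) = 2 * π by ring]
  rw [inv_mul_eq_one₀ (by positivity)]
lemma g_formula (a η : ℝ) (K : ℕ) (ha : 0 < a) (hη : η = a / (2 * (K:ℝ) + 1))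
    (g : ℝ → ℝ)
    (hg_out : ∀ x : ℝ, a < |x| → g x = 0)
    (hg_in : ∀ k : ℤ, |k| ≤ (K : ℤ) →
      ∀ x ∈ Set.Icc ((2 * (k : ℝ) - 1) * η) ((2 * (k : ℝ) + 1) * η),
        g x = 1 - |x - 2 * (k : ℝ) * η| / η) :
    ∀ x : ℝ, g x = if a < |x| then 0
      else 1 - |x - 2 * ((round (x / (2 * η)) : ℤ) : ℝ) * η| / η := by
  have hK1 : (0:ℝ) < 2 * (K:ℝ) + 1 := by positivity
  have hη0 : 0 < η := by rw [hη]; positivity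
  have h2η : (0:ℝ) < 2 * η := by positivity
  have haη : a = (2 * (K:ℝ) + 1) * η := by rw [hη]; field_simp
  have hadiv : a / (2 * η) = (K:ℝ) + 1/2 := by rw [haη]; field_simp
  intro x
  have hxdiv : x = x / (2 * η) * (2 * η) := by field_simp
  by_cases hxa : a < |x|
  · rw [if_pos hxa, hg_out x hxa]
  · rw [if_neg hxa]
    push_neg at hxa
    rw [abs_le] at hxa
    rcases eq_or_lt_of_le hxa.2 with heq | hlt
    · -- x = a
      have hrk : round (x / (2 * η)) = (K : ℤ) + 1 := by
        have hx2 : x / (2 * η) = (K:ℝ) + 1/2 := by rw [heq, hadiv]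
        rw [round_eq, hx2]
        have : (K:ℝ) + 1/2 + 1/2 = ((K:ℤ) + 1 : ℤ) := by push_cast; ring
        rw [this, Int.floor_intCast]
      rw [hrk]
      have hga : g x = 0 := by
        have hmem : x ∈ Set.Icc ((2 * (((K:ℤ)):ℝ) - 1) * η) ((2 * (((K:ℤ)):ℝ) + 1) * η) := by
          constructor <;> (push_cast; rw [heq, haη]; try nlinarith)
        have := hg_in K (by simp) x hmem
        rw [this]
        have h1 : x - 2 * (((K:ℤ)):ℝ) * η = η := by push_cast; rw [heq, haη]; ring
        rw [h1, abs_of_pos hη0, div_self hη0.ne']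
        ring
      rw [hga]
      have h2 : x - 2 * (((K:ℤ) + 1 : ℤ) : ℝ) * η = -η := by push_cast; rw [heq, haη]; ring
      rw [h2, abs_neg, abs_of_pos hη0, div_self hη0.ne']
      ring
    · -- -a ≤ x < a
      set k : ℤ := round (x / (2 * η)) with hk
      have hround := abs_sub_le_iff.mp (abs_sub_round (x / (2 * η)))
      have hb1 := mul_le_mul_of_nonneg_right hround.1 h2η.le
      have hb2 := mul_le_mul_of_nonneg_right hround.2 h2η.le
      rw [sub_mul] at hb1 hb2
      have hxk : |x - 2 * (k:ℝ) * η| ≤ η := by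
        rw [abs_sub_le_iff]
        constructor <;> nlinarith [hxdiv]
      have hkK : |k| ≤ (K:ℤ) := by
        rw [abs_le]
        constructor
        · rw [hk, round_eq]
          apply Int.le_floor.mpr
          have hd : -a / (2*η) ≤ x / (2*η) := by gcongr; exact hxa.1
          rw [neg_div, hadiv] at hd
          push_cast
          linarith
        · have : k < (K:ℤ) + 1 := by
            rw [hk, round_eq]
            apply Int.floor_lt.mpr
            have hd : x / (2*η) < a / (2*η) := by gcongr
            rw [hadiv] at hd
            push_cast
            linarith
          omega
      have hmem : x ∈ Set.Icc ((2 * (k:ℝ) - 1) * η) ((2 * (k:ℝ) + 1) * η) := by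
        have := abs_sub_le_iff.mp hxk
        constructor <;> [nlinarith [this.2]; nlinarith [this.1]]
      exact hg_in k hkK x hmem


set_option maxHeartbeats 2000000 in
/-- Construction of a distribution `ρ` close to `ν = N(0,1)` in `∞`-Rényi
divergence (`R_∞(ρ‖ν) ≤ ε`) but with large relative Fisher information
(`FI(ρ‖ν) = ∫ ρ (g')² ≥ L`): `ρ ∝ ν e^{-g}` where `g` is a periodic triangular
spike function of height `1` and half-width `η = a/(2K+1)` supported on `[-a,a]`,
with `ν([-a,a]) = ε`, `M = max{1/a, √(eL/ε)}`, and `K` the smallest nonnegative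
integer with `(2K+1)/M ≥ a`. -/
theorem largeFisherInfo_smallRenyiInfty
    (ε L a M η : ℝ) (K : ℕ)
    (hε : 0 < ε) (hε1 : ε < 1) (hL : 1 < L) (ha : 0 < a)
    (haε : ∫ x in Set.Icc (-a) a, stdGaussDensity x = ε)
    (hM : M = max (1 / a) (Real.sqrt (Real.exp 1 * L / ε)))
    (hK : a ≤ (2 * (K : ℝ) + 1) / M)
    (hKmin : ∀ K' : ℕ, a ≤ (2 * (K' : ℝ) + 1) / M → K ≤ K')
    (hη : η = a / (2 * (K : ℝ) + 1))
    (g : ℝ → ℝ)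
    (hg_out : ∀ x : ℝ, a < |x| → g x = 0)
    (hg_in : ∀ k : ℤ, |k| ≤ (K : ℤ) →
      ∀ x ∈ Set.Icc ((2 * (k : ℝ) - 1) * η) ((2 * (k : ℝ) + 1) * η),
        g x = 1 - |x - 2 * (k : ℝ) * η| / η)
    (ρ : ℝ → ℝ)
    (hρ : ∀ x : ℝ, ρ x = stdGaussDensity x * Real.exp (-g x)
        / ∫ y : ℝ, stdGaussDensity y * Real.exp (-g y)) :
    (∀ x : ℝ, Real.log (ρ x / stdGaussDensity x) ≤ ε) ∧
    L ≤ ∫ x : ℝ, ρ x * (deriv g x) ^ 2 := by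
  have hK1 : (0:ℝ) < 2 * (K:ℝ) + 1 := by positivity
  have hη0 : 0 < η := by rw [hη]; positivity
  have haη : a = (2 * (K:ℝ) + 1) * η := by rw [hη]; field_simp
  have hgF := g_formula a η K ha hη g hg_out hg_in
  -- 0 ≤ g ≤ 1
  have h2η : (0:ℝ) < 2 * η := by positivity
  have hspike : ∀ x : ℝ, |x - 2 * ((round (x / (2*η)) : ℤ) : ℝ) * η| ≤ η := by
    intro x
    have hxdiv : x = x / (2 * η) * (2 * η) := by field_simp
    have hround := abs_sub_le_iff.mp (abs_sub_round (x / (2 * η)))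
    have hb1 := mul_le_mul_of_nonneg_right hround.1 h2η.le
    have hb2 := mul_le_mul_of_nonneg_right hround.2 h2η.le
    rw [sub_mul] at hb1 hb2
    rw [abs_sub_le_iff]
    constructor <;> nlinarith [hxdiv]
  have hg0 : ∀ x, 0 ≤ g x := by
    intro x
    rw [hgF x]
    split
    · exact le_rfl
    · have h1 := hspike x
      have h2 : |x - 2 * ((round (x / (2*η)) : ℤ) : ℝ) * η| / η ≤ 1 := by
        rw [div_le_one hη0]; exact h1
      linarith
  have hg1 : ∀ x, g x ≤ 1 := by
    intro x
    rw [hgF x]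
    split
    · norm_num
    · have : 0 ≤ |x - 2 * ((round (x / (2*η)) : ℤ) : ℝ) * η| / η :=
        div_nonneg (abs_nonneg _) hη0.le
      linarith
  -- measurability of g
  have hgm : Measurable g := by
    have : g = (fun x : ℝ => if a < |x| then (0:ℝ)
      else 1 - |x - 2 * ((round (x / (2 * η)) : ℤ) : ℝ) * η| / η) := funext hgF
    rw [this]
    apply Measurable.ite
    · exact measurableSet_lt measurable_const measurable_abs
    · exact measurable_const
    · apply Measurable.const_sub
      apply Measurable.div_const
      apply Measurable.abs
      apply Measurable.sub measurable_id
      apply Measurable.mul_const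
      apply Measurable.const_mul
      simp_rw [round_eq]
      exact measurable_from_top.comp ((measurable_id.div_const _).add_const _).floor
  -- the normalization constant
  set Z : ℝ := ∫ y : ℝ, stdGaussDensity y * Real.exp (-g y) with hZ
  have hfm : Measurable (fun y : ℝ => stdGaussDensity y * Real.exp (-g y)) :=
    gauss_measurable.mul (Real.measurable_exp.comp hgm.neg)
  have hfle : ∀ y : ℝ, stdGaussDensity y * Real.exp (-g y) ≤ stdGaussDensity y := by
    intro y
    have h1 : Real.exp (-g y) ≤ 1 := Real.exp_le_one_iff.mpr (by linarith [hg0 y])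
    nlinarith [gauss_pos y, (Real.exp_pos (-g y)).le]
  have hfnn : ∀ y : ℝ, 0 ≤ stdGaussDensity y * Real.exp (-g y) := fun y =>
    mul_nonneg (gauss_pos y).le (Real.exp_pos _).le
  have hZint : Integrable (fun y : ℝ => stdGaussDensity y * Real.exp (-g y)) := by
    refine gauss_integrable.mono' hfm.aestronglyMeasurable ?_
    filter_upwards with y
    rw [Real.norm_eq_abs, abs_of_nonneg (hfnn y)]
    exact hfle y
  have hZ1 : Z ≤ 1 := by
    rw [hZ, ← gauss_integral]
    exact integral_mono hZint gauss_integrable hfle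
  -- lower bound on Z
  have hIcc : MeasurableSet (Set.Icc (-a) a) := measurableSet_Icc
  have hcompl : ∫ y in (Set.Icc (-a) a)ᶜ, stdGaussDensity y = 1 - ε := by
    have := integral_add_compl hIcc gauss_integrable
    rw [haε, gauss_integral] at this
    linarith
  have hZlow : 1 - ε + ε * Real.exp (-1) ≤ Z := by
    have hsplit := integral_add_compl hIcc hZint
    have h1 : ε * Real.exp (-1) ≤ ∫ y in Set.Icc (-a) a, stdGaussDensity y * Real.exp (-g y) := by
      have : ∀ y ∈ Set.Icc (-a) a, stdGaussDensity y * Real.exp (-1) ≤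
          stdGaussDensity y * Real.exp (-g y) := by
        intro y _
        exact mul_le_mul_of_nonneg_left
          (Real.exp_le_exp.mpr (by linarith [hg1 y])) (gauss_pos y).le
      calc ε * Real.exp (-1)
          = ∫ y in Set.Icc (-a) a, stdGaussDensity y * Real.exp (-1) := by
            rw [integral_mul_const, haε]
        _ ≤ _ := setIntegral_mono_on
            (gauss_integrable.mul_const _).integrableOn hZint.integrableOn hIcc this
    have h2 : ∫ y in (Set.Icc (-a) a)ᶜ, stdGaussDensity y * Real.exp (-g y)
        = 1 - ε := by
      rw [← hcompl]
      apply setIntegral_congr_fun hIcc.compl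
      intro y hy
      show stdGaussDensity y * Real.exp (-g y) = stdGaussDensity y
      simp only [Set.mem_compl_iff, Set.mem_Icc, not_and_or, not_le] at hy
      have : a < |y| := by rcases hy with h | h; · rw [abs_of_neg (by linarith)]; linarith
                           · rw [abs_of_pos (by linarith)]; exact h
      rw [hg_out y this]
      simp
    rw [hZ, ← hsplit, h2]
    linarith
  have hZexp : Real.exp (-ε) ≤ Z := by
    have hconv := convexOn_exp.2 (Set.mem_univ (-1:ℝ)) (Set.mem_univ (0:ℝ))
      (le_of_lt hε) (by linarith : (0:ℝ) ≤ 1 - ε) (by ring)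
    simp only [smul_eq_mul] at hconv
    rw [show ε * (-1) + (1-ε) * 0 = -ε by ring] at hconv
    rw [Real.exp_zero] at hconv
    linarith
  have hZpos : 0 < Z := lt_of_lt_of_le (Real.exp_pos _) hZexp
  constructor
  · intro x
    have hratio : ρ x / stdGaussDensity x = Real.exp (-g x) / Z := by
      have h1 : stdGaussDensity x ≠ 0 := (gauss_pos x).ne'
      have h2 : Z ≠ 0 := hZpos.ne'
      rw [hρ x]
      field_simp
    rw [hratio, Real.log_div (Real.exp_ne_zero _) hZpos.ne', Real.log_exp]
    have : -ε ≤ Real.log Z := by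
      calc -ε = Real.log (Real.exp (-ε)) := (Real.log_exp _).symm
        _ ≤ Real.log Z := Real.log_le_log (Real.exp_pos _) hZexp
    linarith [hg0 x]
  · -- Fisher information lower bound
    have hρint : Integrable ρ := by
      have h := hZint.div_const Z
      exact h.congr (by filter_upwards with y using (hρ y).symm)
    have hρlb : ∀ x, stdGaussDensity x * Real.exp (-1) ≤ ρ x := by
      intro x
      rw [hρ x]
      have h1 : stdGaussDensity x * Real.exp (-1) ≤ stdGaussDensity x * Real.exp (-g x) :=
        mul_le_mul_of_nonneg_left (Real.exp_le_exp.mpr (neg_le_neg (hg1 x))) (gauss_pos x).le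
      have h2 : stdGaussDensity x * Real.exp (-g x) ≤ stdGaussDensity x * Real.exp (-g x) / Z := by
        rw [le_div_iff₀ hZpos]
        nlinarith [hfnn x]
      linarith
    set S : Set ℝ := {a, -a} ∪ Set.range (fun j : ℤ => (j:ℝ) * η) with hSdef
    have hS0 : volume S = 0 :=
      (((Set.countable_singleton (-a)).insert a).union (Set.countable_range _)).measure_zero _
    have hkey : ∀ x ∉ S, ρ x * (deriv g x)^2
        = Set.indicator (Set.Icc (-a) a) (fun y => ρ y * (1/η)^2) x := by
      clear_value Z
      clear hZ hfm hfle hfnn hZint hZ1 hcompl hZlow hZexp hZpos hρ hρint hρlb hgF hspike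
        hgm hg0 hg1 haε hM hK hKmin hS0
      intro x hx
      have hxa' : x ≠ a := by intro h; exact hx (Or.inl (by simp [h]))
      have hxna : x ≠ -a := by intro h; exact hx (Or.inl (by simp [h]))
      have hxj : ∀ j : ℤ, x ≠ (j:ℝ) * η := fun j h => hx (Or.inr ⟨j, h.symm⟩)
      by_cases hxa : a < |x|
      · have hnot : x ∉ Set.Icc (-a) a := by
          intro hmem
          rw [Set.mem_Icc] at hmem
          have := abs_le.mpr hmem
          linarith
        rw [Set.indicator_of_notMem hnot]
        have hev : g =ᶠ[nhds x] (fun _ => (0:ℝ)) := by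
          have hopen : IsOpen {y : ℝ | a < |y|} := isOpen_lt continuous_const continuous_abs
          filter_upwards [hopen.mem_nhds hxa] with y hy using hg_out y hy
        rw [hev.deriv_eq, deriv_const]
        ring
      · push_neg at hxa
        rw [abs_le] at hxa
        have hlt1 : -a < x := lt_of_le_of_ne hxa.1 (Ne.symm hxna)
        have hlt2 : x < a := lt_of_le_of_ne hxa.2 hxa'
        rw [Set.indicator_of_mem (Set.mem_Icc.mpr ⟨hxa.1, hxa.2⟩)]
        set j : ℤ := ⌊x / η⌋ with hj
        have hxdiv2 : x / η * η = x := div_mul_cancel₀ x hη0.ne'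
        have hf1 : (j:ℝ) * η ≤ x := by
          have := mul_le_mul_of_nonneg_right (Int.floor_le (x/η)) hη0.le
          rw [hxdiv2] at this
          exact this
        have hf1' : (j:ℝ) * η < x := lt_of_le_of_ne hf1 (Ne.symm (hxj j))
        have hf2 : x < ((j:ℝ) + 1) * η := by
          have := mul_lt_mul_of_pos_right (Int.lt_floor_add_one (x/η)) hη0
          rw [hxdiv2] at this
          exact this
        have hjlb : -(2*(K:ℤ)+1) ≤ j := by
          rw [hj]
          apply Int.le_floor.mpr
          rw [le_div_iff₀ hη0]
          push_cast
          nlinarith [hlt1, haη]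
        have hjub : j < 2*(K:ℤ)+1 := by
          rw [hj]
          apply Int.floor_lt.mpr
          rw [div_lt_iff₀ hη0]
          push_cast
          nlinarith [hlt2, haη]
        rcases Int.even_or_odd j with ⟨c, hc⟩ | ⟨c, hc⟩
        · -- j = c + c, slope -1/η
          have hcK : |c| ≤ (K:ℤ) := by rw [abs_le]; omega
          have hcc : (j:ℝ) = 2*(c:ℝ) := by rw [hc]; push_cast; ring
          have he1 : 2*(c:ℝ)*η = (j:ℝ)*η := by rw [hcc]
          have he2 : (2*(c:ℝ)+1)*η = ((j:ℝ)+1)*η := by rw [hcc]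
          have hlb : 2*(c:ℝ)*η < x := by rw [he1]; exact hf1'
          have hub : x < (2*(c:ℝ)+1)*η := by rw [he2]; exact hf2
          have hev : g =ᶠ[nhds x] (fun y => 1 - (y - 2*(c:ℝ)*η)/η) := by
            filter_upwards [Ioo_mem_nhds hlb hub] with y hy
            have hylb := hy.1
            have hyub := hy.2
            have hmem : y ∈ Set.Icc ((2*(c:ℝ) - 1) * η) ((2*(c:ℝ) + 1) * η) := by
              constructor
              · nlinarith
              · exact hyub.le
            have habs : |y - 2*(c:ℝ)*η| = y - 2*(c:ℝ)*η := abs_of_nonneg (by nlinarith)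
            rw [hg_in c hcK y hmem, habs]
          have hd : HasDerivAt (fun y : ℝ => 1 - (y - 2*(c:ℝ)*η)/η) (-(1/η)) x := by
            have h0 := (((hasDerivAt_id x).sub_const (2*(c:ℝ)*η)).div_const η).const_sub 1
            simpa using h0
          rw [hev.deriv_eq, hd.deriv]
          ring
        · -- j = 2c+1, slope 1/η ; use m = c+1
          have hcK : |c+1| ≤ (K:ℤ) := by rw [abs_le]; omega
          have hcc : (j:ℝ) = 2*((c:ℝ)+1) - 1 := by rw [hc]; push_cast; ring
          have he1 : (2*((c:ℝ)+1) - 1)*η = (j:ℝ)*η := by rw [hcc]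
          have he2 : 2*((c:ℝ)+1)*η = ((j:ℝ)+1)*η := by rw [hcc]; ring
          have hub : x < 2*((c:ℝ)+1)*η := by rw [he2]; exact hf2
          have hlb : (2*((c:ℝ)+1) - 1)*η < x := by rw [he1]; exact hf1'
          have hev : g =ᶠ[nhds x] (fun y => 1 - (2*((c:ℝ)+1)*η - y)/η) := by
            filter_upwards [Ioo_mem_nhds hlb hub] with y hy
            have hmem : y ∈ Set.Icc ((2*(((c+1:ℤ)):ℝ) - 1) * η) ((2*(((c+1:ℤ)):ℝ) + 1) * η) := by
              constructor
              · push_cast; linarith [hy.1]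
              · push_cast; nlinarith [hy.2, hη0]
            rw [hg_in (c+1) hcK y hmem]
            push_cast
            rw [abs_of_nonpos (by push_cast; linarith [hy.2] : y - 2*((c:ℝ)+1)*η ≤ 0)]
            ring_nf
          have hd : HasDerivAt (fun y : ℝ => 1 - (2*((c:ℝ)+1)*η - y)/η) (-(-1/η)) x :=
            (((hasDerivAt_id x).const_sub (2*((c:ℝ)+1)*η)).div_const η).const_sub 1
          rw [hev.deriv_eq, hd.deriv]
          ring
    have hSae : ∀ᵐ x ∂(volume : Measure ℝ), x ∉ S := by
      rw [ae_iff]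
      simpa using hS0
    have hae : (fun x => ρ x * (deriv g x)^2) =ᵐ[volume]
        Set.indicator (Set.Icc (-a) a) (fun y => ρ y * (1/η)^2) := by
      filter_upwards [hSae] with x hx using hkey x hx
    rw [integral_congr_ae hae, integral_indicator hIcc]
    have hmono : ∫ x in Set.Icc (-a) a, (stdGaussDensity x * Real.exp (-1)) * (1/η)^2
        ≤ ∫ x in Set.Icc (-a) a, ρ x * (1/η)^2 := by
      apply setIntegral_mono_on ((gauss_integrable.mul_const _).mul_const _).integrableOn
        (hρint.mul_const _).integrableOn hIcc
      intro x _
      exact mul_le_mul_of_nonneg_right (hρlb x) (by positivity)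
    have hval : ∫ x in Set.Icc (-a) a, (stdGaussDensity x * Real.exp (-1)) * (1/η)^2
        = ε * Real.exp (-1) * (1/η)^2 := by
      rw [integral_mul_const, integral_mul_const, haε]
    -- numeric chain
    have hMpos : 0 < M := lt_of_lt_of_le (by positivity : (0:ℝ) < 1/a) (hM ▸ le_max_left _ _)
    have hηM : M ≤ 1/η := by
      have h1 : a * M ≤ 2*(K:ℝ)+1 := (le_div_iff₀ hMpos).mp hK
      rw [le_div_iff₀ hη0, hη, ← mul_div_assoc, div_le_one hK1]
      linarith
    have hc0 : (0:ℝ) ≤ Real.exp 1 * L / ε := by positivity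
    have hM2 : Real.exp 1 * L / ε ≤ M^2 := by
      have h := hM ▸ le_max_right (1/a) (Real.sqrt (Real.exp 1 * L / ε))
      calc Real.exp 1 * L / ε = Real.sqrt (Real.exp 1 * L / ε)^2 := (Real.sq_sqrt hc0).symm
        _ ≤ M^2 := pow_le_pow_left₀ (Real.sqrt_nonneg _) h 2
    have h1η2 : Real.exp 1 * L / ε ≤ (1/η)^2 :=
      le_trans hM2 (pow_le_pow_left₀ hMpos.le hηM 2)
    have hLval : L = ε * Real.exp (-1) * (Real.exp 1 * L / ε) := by
      rw [Real.exp_neg]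
      field_simp
    calc L = ε * Real.exp (-1) * (Real.exp 1 * L / ε) := hLval
      _ ≤ ε * Real.exp (-1) * (1/η)^2 := by
          apply mul_le_mul_of_nonneg_left h1η2 (by positivity)
      _ = ∫ x in Set.Icc (-a) a, (stdGaussDensity x * Real.exp (-1)) * (1/η)^2 := hval.symm
      _ ≤ _ := hmono
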